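/- Let p ∈ H¹(𝕋), q ∈ L²(𝕋) be real-valued and 1-periodic, and let β be the function built from v = i p'/√3 + q as in the context. Then for every n ∈ ℕ, at the unperturbed eigenvalue μ_n^o = (2πn/√3)³ one has β(μ_n^o) = 2i·(−1)^{n+1}·e^{√3πn}·(1 − (−1)ⁿ e^{−√3πn})²·Im(ω v̂_n), where v̂_n = ∫₀¹ e^{−2πi n s} v(s) ds. -/

import Mathlib

open MeasureTheory Complex Matrix

noncomputable def omg : ℂ := Complex.exp (2 * Real.pi * Complex.I / 3)

/-- `ζ₁(x) = ∫ₓ² e^{i√3ω²z(x−s)} v ds + ω² ∫ₓ² e^{−i√3z(x−s)} v̄ ds`. -/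
noncomputable def zeta1 (v : ℝ → ℂ) (z : ℂ) (x : ℝ) : ℂ :=
  (∫ s in x..(2:ℝ),
      Complex.exp (Complex.I * (Real.sqrt 3 : ℂ) * omg ^ 2 * z * ((x - s : ℝ) : ℂ)) * v s)
  + omg ^ 2 * ∫ s in x..(2:ℝ),
      Complex.exp (-(Complex.I * (Real.sqrt 3 : ℂ) * z * ((x - s : ℝ) : ℂ)))
        * (starRingEnd ℂ) (v s)

/-- `ζ₂(x) = −ω ∫₀ˣ e^{i√3z(x−s)} v ds + ∫ₓ² e^{−i√3ωz(x−s)} v̄ ds`. -/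
noncomputable def zeta2 (v : ℝ → ℂ) (z : ℂ) (x : ℝ) : ℂ :=
  -omg * (∫ s in (0:ℝ)..x,
      Complex.exp (Complex.I * (Real.sqrt 3 : ℂ) * z * ((x - s : ℝ) : ℂ)) * v s)
  + ∫ s in x..(2:ℝ),
      Complex.exp (-(Complex.I * (Real.sqrt 3 : ℂ) * omg * z * ((x - s : ℝ) : ℂ)))
        * (starRingEnd ℂ) (v s)

/-- `ζ₃(x) = −ω² ∫₀ˣ e^{i√3ωz(x−s)} v ds − ω ∫₀ˣ e^{−i√3ω²z(x−s)} v̄ ds`. -/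
noncomputable def zeta3 (v : ℝ → ℂ) (z : ℂ) (x : ℝ) : ℂ :=
  -omg ^ 2 * (∫ s in (0:ℝ)..x,
      Complex.exp (Complex.I * (Real.sqrt 3 : ℂ) * omg * z * ((x - s : ℝ) : ℂ)) * v s)
  - omg * ∫ s in (0:ℝ)..x,
      Complex.exp (-(Complex.I * (Real.sqrt 3 : ℂ) * omg ^ 2 * z * ((x - s : ℝ) : ℂ)))
        * (starRingEnd ℂ) (v s)

/-- The function `β`, built from `v = i p'/√3 + q` via the `ζ_j` and the three
determinants; `z = λ^{1/3}` is the cube root with argument in `(−π/3, π/3]`. -/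
noncomputable def betaF (v : ℝ → ℂ) (lam : ℂ) : ℂ :=
  Matrix.det !![zeta1 v (lam ^ ((1:ℂ)/3)) 0, 1, 1;
      zeta1 v (lam ^ ((1:ℂ)/3)) 1 * Complex.exp (omg * lam ^ ((1:ℂ)/3)),
        Complex.exp (omg ^ 2 * lam ^ ((1:ℂ)/3)), Complex.exp (lam ^ ((1:ℂ)/3));
      0, Complex.exp (2 * omg ^ 2 * lam ^ ((1:ℂ)/3)), Complex.exp (2 * lam ^ ((1:ℂ)/3))]
  + Matrix.det !![1, zeta2 v (lam ^ ((1:ℂ)/3)) 0, 1;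
      Complex.exp (omg * lam ^ ((1:ℂ)/3)),
        zeta2 v (lam ^ ((1:ℂ)/3)) 1 * Complex.exp (omg ^ 2 * lam ^ ((1:ℂ)/3)),
        Complex.exp (lam ^ ((1:ℂ)/3));
      Complex.exp (2 * omg * lam ^ ((1:ℂ)/3)),
        zeta2 v (lam ^ ((1:ℂ)/3)) 2 * Complex.exp (2 * omg ^ 2 * lam ^ ((1:ℂ)/3)),
        Complex.exp (2 * lam ^ ((1:ℂ)/3))]
  + Matrix.det !![1, 1, 0;
      Complex.exp (omg * lam ^ ((1:ℂ)/3)), Complex.exp (omg ^ 2 * lam ^ ((1:ℂ)/3)),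
        zeta3 v (lam ^ ((1:ℂ)/3)) 1 * Complex.exp (lam ^ ((1:ℂ)/3));
      Complex.exp (2 * omg * lam ^ ((1:ℂ)/3)), Complex.exp (2 * omg ^ 2 * lam ^ ((1:ℂ)/3)),
        zeta3 v (lam ^ ((1:ℂ)/3)) 2 * Complex.exp (2 * lam ^ ((1:ℂ)/3))]

/-! At `λ = μ_n°` the cube root is the real number `z = 2πn/√3`, for which `e^{ωz} = e^{ω²z}`:
the third determinant then has two equal columns, so `ζ₃` drops out. Periodicity of `v` turns
every `ζ_j(x)`, `x ∈ {0, 1, 2}`, into a combination of one-period integrals `∫₀¹ e^{-As} f(s) ds`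
of `f = v` and `f = v̄`. For `A = i√3 z = 2πin` this is `v̂_n` (its conjugate for `v̄`); the two
other exponents cancel out of the expansion, because `1 - i√3ω² = ω` and `1 + i√3ω = ω²`. What is
left is `e^{ωz} (e^z - e^{ωz})² (ω² conj(v̂_n) - ω v̂_n)`, and `conj ω = ω²` turns the last factor
into `-2i Im(ω v̂_n)`. -/

open ComplexConjugate Function
open scoped Real

noncomputable def unitLaplace (A : ℂ) (f : ℝ → ℂ) : ℂ :=
  ∫ s in (0:ℝ)..1, cexp (-(A * s)) * f s

section UnitLaplace

variable {f : ℝ → ℂ}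

theorem unitLaplace_conj (A : ℂ) :
    unitLaplace (conj A) (fun s => conj (f s)) = conj (unitLaplace A f) := by
  simp only [unitLaplace, ← intervalIntegral.intervalIntegral_conj, map_mul, ← Complex.exp_conj,
    map_neg, conj_ofReal]

theorem integral_exp_mul_sub_mul (A : ℂ) (x a b : ℝ) :
    ∫ s in a..b, cexp (A * ↑(x - s)) * f s
      = cexp (A * x) * ∫ s in a..b, cexp (-(A * s)) * f s := by
  rw [← intervalIntegral.integral_const_mul]
  refine intervalIntegral.integral_congr fun s _ => ?_
  rw [ofReal_sub, mul_sub, sub_eq_add_neg, exp_add, mul_assoc]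

theorem integral_exp_neg_mul_sub_mul (A : ℂ) (x a b : ℝ) :
    ∫ s in a..b, cexp (-(A * ↑(x - s))) * f s
      = cexp (-(A * x)) * ∫ s in a..b, cexp (-(-A * s)) * f s := by
  simpa only [neg_mul] using integral_exp_mul_sub_mul (-A) x a b

theorem integral_one_two_exp_mul (hf : Periodic f 1) (A : ℂ) :
    ∫ s in (1:ℝ)..2, cexp (-(A * s)) * f s = cexp (-A) * unitLaplace A f := by
  have hshift := intervalIntegral.integral_comp_add_right
    (fun s : ℝ => cexp (-(A * s)) * f s) (a := 0) (b := 1) 1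
  norm_num at hshift
  rw [← hshift, unitLaplace, ← intervalIntegral.integral_const_mul]
  refine intervalIntegral.integral_congr fun s _ => ?_
  rw [hf s, mul_add, mul_one, neg_add, exp_add]
  ring

theorem integral_zero_two_exp_mul (hf : Periodic f 1) (hi : IntervalIntegrable f volume 0 1)
    (A : ℂ) :
    ∫ s in (0:ℝ)..2, cexp (-(A * s)) * f s = (1 + cexp (-A)) * unitLaplace A f := by
  have hi' : IntervalIntegrable f volume 1 2 := by
    simpa [hf.sub_eq, one_add_one_eq_two] using hi.comp_sub_right 1
  have hexp : Continuous fun s : ℝ => cexp (-(A * s)) := by fun_prop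
  rw [← intervalIntegral.integral_add_adjacent_intervals
    (hi.continuousOn_mul hexp.continuousOn) (hi'.continuousOn_mul hexp.continuousOn),
    integral_one_two_exp_mul hf, unitLaplace]
  ring

end UnitLaplace

theorem IntervalIntegrable.conj {f : ℝ → ℂ} {a b : ℝ} (hf : IntervalIntegrable f volume a b) :
    IntervalIntegrable (fun s => conj (f s)) volume a b :=
  ⟨conjCLE.toContinuousLinearMap.integrable_comp hf.1,
    conjCLE.toContinuousLinearMap.integrable_comp hf.2⟩

section Zeta

variable {v : ℝ → ℂ} (hv : Periodic v 1) (z : ℂ)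
include hv

theorem zeta1_zero (hi : IntervalIntegrable v volume 0 1) :
    zeta1 v z 0 = (1 + cexp (-(I * √3 * omg ^ 2 * z))) * unitLaplace (I * √3 * omg ^ 2 * z) v
      + omg ^ 2 * ((1 + cexp (I * √3 * z)) * unitLaplace (-(I * √3 * z)) fun s => conj (v s)) := by
  rw [zeta1, integral_exp_mul_sub_mul, integral_exp_neg_mul_sub_mul,
    integral_zero_two_exp_mul hv hi,
    integral_zero_two_exp_mul (f := fun s => conj (v s)) (hv.comp conj) hi.conj]
  simp

theorem zeta1_one :
    zeta1 v z 1 = unitLaplace (I * √3 * omg ^ 2 * z) v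
      + omg ^ 2 * unitLaplace (-(I * √3 * z)) fun s => conj (v s) := by
  rw [zeta1, integral_exp_mul_sub_mul, integral_exp_neg_mul_sub_mul,
    integral_one_two_exp_mul hv,
    integral_one_two_exp_mul (f := fun s => conj (v s)) (hv.comp conj)]
  simp [← mul_assoc, ← exp_add]

theorem zeta2_zero (hi : IntervalIntegrable v volume 0 1) :
    zeta2 v z 0 = (1 + cexp (I * √3 * omg * z)) * unitLaplace (-(I * √3 * omg * z))
      fun s => conj (v s) := by
  rw [zeta2, integral_exp_neg_mul_sub_mul,
    integral_zero_two_exp_mul (f := fun s => conj (v s)) (hv.comp conj) hi.conj]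
  simp

theorem zeta2_one :
    zeta2 v z 1 = -omg * (cexp (I * √3 * z) * unitLaplace (I * √3 * z) v)
      + unitLaplace (-(I * √3 * omg * z)) fun s => conj (v s) := by
  rw [zeta2, integral_exp_mul_sub_mul, integral_exp_neg_mul_sub_mul,
    integral_one_two_exp_mul (f := fun s => conj (v s)) (hv.comp conj)]
  simp [← mul_assoc, ← exp_add, unitLaplace]

theorem zeta2_two (hi : IntervalIntegrable v volume 0 1) :
    zeta2 v z 2
      = -omg * (cexp (I * √3 * z) * (cexp (I * √3 * z) + 1) * unitLaplace (I * √3 * z) v) := by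
  rw [zeta2, integral_exp_mul_sub_mul, integral_zero_two_exp_mul hv hi,
    intervalIntegral.integral_same, add_zero, ofReal_ofNat, mul_two, exp_add, exp_neg]
  field_simp

end Zeta

theorem betaF_eq_of_exp_omg_mul_eq {v : ℝ → ℂ} {lam z : ℂ} (hz : lam ^ ((1:ℂ)/3) = z)
    (he : cexp (omg * z) = cexp (omg ^ 2 * z)) :
    betaF v lam = cexp (omg * z) * (cexp z - cexp (omg * z)) *
      (zeta1 v z 0 * cexp z - zeta1 v z 1 * (cexp z + cexp (omg * z))
        + zeta2 v z 1 * (cexp z + cexp (omg * z)) - zeta2 v z 2 * cexp (omg * z)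
        - zeta2 v z 0 * cexp z) := by
  have hsq (w : ℂ) : cexp (2 * w) = cexp w ^ 2 := by rw [sq, ← exp_add, two_mul]
  rw [betaF, hz, mul_assoc 2, mul_assoc 2, hsq, hsq, hsq, ← he]
  simp only [det_fin_three, of_apply, cons_val', cons_val_zero, cons_val_fin_one, cons_val_one,
    cons_val]
  ring

theorem omg_eq : omg = -1 / 2 + √3 / 2 * I := by
  rw [omg, show 2 * π * I / 3 = ((π - π / 3 : ℝ) : ℂ) * I by push_cast; ring, exp_mul_I,
    ← ofReal_cos, ← ofReal_sin, Real.cos_pi_sub, Real.sin_pi_sub, Real.cos_pi_div_three,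
    Real.sin_pi_div_three]
  push_cast
  ring

theorem ofReal_sqrt_three_sq : (√3 : ℂ) ^ 2 = 3 := by
  rw [← ofReal_pow, Real.sq_sqrt (by norm_num : (0:ℝ) ≤ 3), ofReal_ofNat]

theorem omg_sq_eq : omg ^ 2 = -1 / 2 - √3 / 2 * I := by
  rw [omg_eq]
  linear_combination I ^ 2 / 4 * ofReal_sqrt_three_sq + 3 / 4 * I_sq

theorem conj_omg : conj omg = omg ^ 2 := by
  rw [omg_sq_eq, omg_eq]
  simp [map_ofNat, conj_ofReal]
  ring

theorem exp_add_nat_mul_pi_mul_I (x : ℝ) (n : ℕ) :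
    cexp (x + n * π * I) = (-1) ^ n * Real.exp x := by
  rw [exp_add, mul_assoc, exp_nat_mul, exp_pi_mul_I, ofReal_exp, mul_comm]

theorem exp_sub_nat_mul_pi_mul_I (x : ℝ) (n : ℕ) :
    cexp (x - n * π * I) = (-1) ^ n * Real.exp x := by
  rw [exp_sub, mul_assoc, exp_nat_mul, exp_pi_mul_I, ofReal_exp, div_eq_mul_inv, ← inv_pow,
    inv_neg, inv_one, mul_comm]

noncomputable def unperturbedRoot (n : ℕ) : ℝ := 2 * π * n / √3

section UnperturbedRoot

variable (n : ℕ)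

local notation "r" => (unperturbedRoot n : ℂ)
local notation "κ" => (π * n / √3 : ℝ)

theorem sqrt_three_mul_unperturbedRoot : (√3 : ℂ) * r = 2 * π * n := by
  have : (√3 : ℂ) ≠ 0 := by simp
  rw [unperturbedRoot]
  push_cast
  field_simp

theorem exp_I_mul_sqrt_three_mul_unperturbedRoot : cexp (I * √3 * r) = 1 := by
  rw [mul_assoc, sqrt_three_mul_unperturbedRoot, ← exp_nat_mul_two_pi_mul_I n]
  ring_nf

theorem ofReal_unperturbedRoot : r = 2 * (π * n / √3 : ℂ) := by
  rw [unperturbedRoot]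
  push_cast
  ring

theorem exp_omg_mul_unperturbedRoot : cexp (omg * r) = (-1) ^ n * (Real.exp κ)⁻¹ := by
  rw [show omg * r = ((-κ : ℝ) : ℂ) + n * π * I by
      rw [omg_eq]
      push_cast
      linear_combination (-1 / 2 : ℂ) * ofReal_unperturbedRoot n
        + I / 2 * sqrt_three_mul_unperturbedRoot n,
    exp_add_nat_mul_pi_mul_I, Real.exp_neg]

theorem exp_omg_sq_mul_unperturbedRoot : cexp (omg ^ 2 * r) = (-1) ^ n * (Real.exp κ)⁻¹ := by
  rw [show omg ^ 2 * r = ((-κ : ℝ) : ℂ) - n * π * I by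
      rw [omg_sq_eq]
      push_cast
      linear_combination (-1 / 2 : ℂ) * ofReal_unperturbedRoot n
        - I / 2 * sqrt_three_mul_unperturbedRoot n,
    exp_sub_nat_mul_pi_mul_I, Real.exp_neg]

theorem exp_unperturbedRoot : cexp r = Real.exp κ ^ 2 := by
  rw [← ofReal_exp, unperturbedRoot, show 2 * π * n / √3 = κ + κ by ring, Real.exp_add, ← sq]
  push_cast
  rfl

theorem exp_sqrt_three_mul_pi_mul : Real.exp (√3 * π * n) = Real.exp κ ^ 3 := by
  have : √3 ≠ 0 := by positivity
  rw [← Real.exp_nat_mul]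
  congr 1
  field_simp
  norm_num [mul_comm]

theorem exp_neg_I_mul_sqrt_three_mul_omg_sq_mul_unperturbedRoot :
    cexp (-(I * √3 * omg ^ 2 * r)) = (-1) ^ n * (Real.exp (√3 * π * n))⁻¹ := by
  rw [show -(I * √3 * omg ^ 2 * r) = ((-(√3 * π * n) : ℝ) : ℂ) + n * π * I by
      rw [omg_sq_eq]
      push_cast
      linear_combination (I / 2 + I ^ 2 * √3 / 2) * sqrt_three_mul_unperturbedRoot n
        + √3 * π * n * I_sq,
    exp_add_nat_mul_pi_mul_I, Real.exp_neg]

theorem exp_I_mul_sqrt_three_mul_omg_mul_unperturbedRoot :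
    cexp (I * √3 * omg * r) = (-1) ^ n * (Real.exp (√3 * π * n))⁻¹ := by
  rw [show I * √3 * omg * r = ((-(√3 * π * n) : ℝ) : ℂ) - n * π * I by
      rw [omg_eq]
      push_cast
      linear_combination (-I / 2 + I ^ 2 * √3 / 2) * sqrt_three_mul_unperturbedRoot n
        + √3 * π * n * I_sq,
    exp_sub_nat_mul_pi_mul_I, Real.exp_neg]

end UnperturbedRoot

theorem ofReal_pow_three_cpow_one_third {x : ℝ} (hx : 0 ≤ x) :
    ((x ^ 3 : ℝ) : ℂ) ^ ((1:ℂ) / 3) = x := by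
  rw [show (1:ℂ) / 3 = ((1 / 3 : ℝ) : ℂ) by push_cast; rfl, ← ofReal_cpow (by positivity),
    ← Real.rpow_natCast, ← Real.rpow_mul hx]
  norm_num

theorem conj_I_mul_sqrt_three_mul_ofReal (x : ℝ) : conj (I * √3 * x) = -(I * √3 * x) := by
  simp

theorem unitLaplace_I_mul_sqrt_three_mul_unperturbedRoot (n : ℕ) (f : ℝ → ℂ) :
    unitLaplace (I * √3 * unperturbedRoot n) f
      = ∫ s in (0:ℝ)..1, cexp (-((2 * π * n * s : ℝ) : ℂ) * I) * f s := by
  refine intervalIntegral.integral_congr fun s _ => ?_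
  rw [mul_assoc I, sqrt_three_mul_unperturbedRoot]
  push_cast
  ring_nf

theorem beta_at_unperturbed_eigenvalues_general
    (p' q : ℝ → ℝ)
    (hp' : Function.Periodic p' 1)
    (hq : Function.Periodic q 1)
    (hip : IntervalIntegrable p' volume 0 1) (hiq : IntervalIntegrable q volume 0 1)
    (v : ℝ → ℂ)
    (hv : ∀ x : ℝ, v x = Complex.I * (p' x : ℂ) / (Real.sqrt 3 : ℂ) + (q x : ℂ)) :
    ∀ n : ℕ,
      betaF v ((((2 * Real.pi * n / Real.sqrt 3) ^ 3 : ℝ)) : ℂ)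
        = 2 * Complex.I * (-1) ^ (n + 1)
            * ((Real.exp (Real.sqrt 3 * Real.pi * n) : ℝ) : ℂ)
            * (((1 - (-1 : ℝ) ^ n * Real.exp (-(Real.sqrt 3 * Real.pi * n)) : ℝ)) : ℂ) ^ 2
            * ((((omg * ∫ s in (0:ℝ)..1,
                  Complex.exp (-(((2 * Real.pi * n * s : ℝ)) : ℂ) * Complex.I) * v s).im : ℝ)) : ℂ) := by
  intro n
  have hv_periodic : Periodic v 1 := fun x => by simp only [hv, hp' x, hq x]
  have hv_int : IntervalIntegrable v volume 0 1 := by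
    rw [show v = fun x => I / √3 * (p' x : ℂ) + q x from funext fun x => by rw [hv]; ring]
    exact (IntervalIntegrable.const_mul ⟨hip.1.ofReal, hip.2.ofReal⟩ _).add
      ⟨hiq.1.ofReal, hiq.2.ofReal⟩
  have hz : ((unperturbedRoot n ^ 3 : ℝ) : ℂ) ^ ((1:ℂ) / 3) = unperturbedRoot n :=
    ofReal_pow_three_cpow_one_third (by unfold unperturbedRoot; positivity)
  have he : cexp (omg * unperturbedRoot n) = cexp (omg ^ 2 * unperturbedRoot n) := by
    rw [exp_omg_mul_unperturbedRoot, exp_omg_sq_mul_unperturbedRoot]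
  change betaF v ((unperturbedRoot n ^ 3 : ℝ) : ℂ) = _
  rw [betaF_eq_of_exp_omg_mul_eq hz he, zeta1_zero hv_periodic _ hv_int, zeta1_one hv_periodic,
    zeta2_zero hv_periodic _ hv_int, zeta2_one hv_periodic, zeta2_two hv_periodic _ hv_int,
    ← conj_I_mul_sqrt_three_mul_ofReal, unitLaplace_conj,
    exp_omg_mul_unperturbedRoot, exp_unperturbedRoot, exp_I_mul_sqrt_three_mul_unperturbedRoot,
    exp_neg_I_mul_sqrt_three_mul_omg_sq_mul_unperturbedRoot,
    exp_I_mul_sqrt_three_mul_omg_mul_unperturbedRoot,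
    ← unitLaplace_I_mul_sqrt_three_mul_unperturbedRoot, Real.exp_neg, exp_sqrt_three_mul_pi_mul]
  have him := sub_conj (omg * unitLaplace (I * √3 * unperturbedRoot n) v)
  rw [map_mul, conj_omg] at him
  have hu : (Real.exp (π * n / √3) : ℂ) ≠ 0 := by exact_mod_cast (Real.exp_pos _).ne'
  push_cast at him hu ⊢
  generalize cexp (π * n / √3) = u at hu ⊢
  field_simp
  linear_combination (-(-1) ^ n * (u ^ 3 - (-1) ^ n) ^ 2) * him

/-- For real-valued 1-periodic `p ∈ H¹(𝕋)`, `q ∈ L²(𝕋)` and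
`v = i p'/√3 + q`, at the unperturbed eigenvalue `μ_n° = (2πn/√3)³` one has
`β(μ_n°) = 2i (−1)^{n+1} e^{√3πn} (1 − (−1)ⁿ e^{−√3πn})² Im(ω v̂_n)` with
`v̂_n = ∫₀¹ e^{−2πins} v(s) ds`. -/
theorem beta_at_unperturbed_eigenvalues
    (p p' q : ℝ → ℝ)
    (hp : Function.Periodic p 1) (hp' : Function.Periodic p' 1)
    (hq : Function.Periodic q 1)
    (hpd : ∀ x : ℝ, p x = p 0 + ∫ t in (0:ℝ)..x, p' t)
    (hip : IntervalIntegrable p' volume 0 1) (hiq : IntervalIntegrable q volume 0 1)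
    (hip2 : IntervalIntegrable (fun x => p' x ^ 2) volume 0 1)
    (hiq2 : IntervalIntegrable (fun x => q x ^ 2) volume 0 1)
    (v : ℝ → ℂ)
    (hv : ∀ x : ℝ, v x = Complex.I * (p' x : ℂ) / (Real.sqrt 3 : ℂ) + (q x : ℂ)) :
    ∀ n : ℕ,
      betaF v ((((2 * Real.pi * n / Real.sqrt 3) ^ 3 : ℝ)) : ℂ)
        = 2 * Complex.I * (-1) ^ (n + 1)
            * ((Real.exp (Real.sqrt 3 * Real.pi * n) : ℝ) : ℂ)
            * (((1 - (-1 : ℝ) ^ n * Real.exp (-(Real.sqrt 3 * Real.pi * n)) : ℝ)) : ℂ) ^ 2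
            * ((((omg * ∫ s in (0:ℝ)..1,
                  Complex.exp (-(((2 * Real.pi * n * s : ℝ)) : ℂ) * Complex.I) * v s).im : ℝ)) : ℂ) :=
  beta_at_unperturbed_eigenvalues_general p' q hp' hq hip hiq v hv
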